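/- Let d ≥ 3 be an integer, G = (V,E) a finite d-claw free graph, w : V → ℝ positive, A* an independent set of maximum weight, and A an independent set admitting no local improvement of w²(A). Then for each v ∈ A, ∑_{u∈A*} contr(u,v) ≤ w(v). -/
import Mathlib


open Finset

open scoped Classical

variable {V : Type*}

noncomputable section

/-- Neighborhood of `U` in `W`: vertices of `W` that lie in `U` or are adjacent to some
vertex of `U`. -/
def nbhd (G : SimpleGraph V) (U W : Finset V) : Finset V :=
  W.filter (fun x => x ∈ U ∨ ∃ u ∈ U, G.Adj u x)

/-- Neighborhood of a single vertex `u` in `W`. -/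
def nbhd1 (G : SimpleGraph V) (u : V) (W : Finset V) : Finset V :=
  nbhd G {u} W

/-- Total weight of a finite set of vertices. -/
def wsum (w : V → ℝ) (U : Finset V) : ℝ := ∑ x ∈ U, w x

/-- Total squared weight of a finite set of vertices. -/
def wsq (w : V → ℝ) (U : Finset V) : ℝ := ∑ x ∈ U, (w x) ^ 2

/-- A finite set of vertices is independent. -/
def IsIndep (G : SimpleGraph V) (S : Finset V) : Prop :=
  ∀ a ∈ S, ∀ b ∈ S, a ≠ b → ¬ G.Adj a b

/-- `G` is `d`-claw free: every independent subset of the neighborhood of any vertex has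
size at most `d - 1`. -/
def ClawFree (G : SimpleGraph V) (d : ℕ) : Prop :=
  ∀ v : V, ∀ S : Finset V, (∀ x ∈ S, G.Adj v x) → IsIndep G S → S.card ≤ d - 1

/-- `X` is a local improvement of `w²(A)`. -/
def LocalImprovement (G : SimpleGraph V) (d : ℕ) (w : V → ℝ) (A X : Finset V) : Prop :=
  IsIndep G X ∧ X.card ≤ (d - 1) ^ 2 + (d - 1) ∧ wsq w (nbhd G X A) < wsq w X

/-- No claw improves `w²(A)`: `w²(T) ≤ w²(N(T,A))` for every independent set `T` that is a
singleton or whose vertices are all adjacent to a common vertex. -/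
def NoClawImproves (G : SimpleGraph V) (w : V → ℝ) (A : Finset V) : Prop :=
  ∀ T : Finset V, IsIndep G T → (T.card = 1 ∨ ∃ v : V, ∀ x ∈ T, G.Adj v x) →
    wsq w T ≤ wsq w (nbhd G T A)

/-- The charge map, relative to a choice `n` of heaviest neighbors. -/
def charge (G : SimpleGraph V) (w : V → ℝ) (A : Finset V) (n : V → V) (u v : V) : ℝ :=
  if v = n u then w u - wsum w (nbhd1 G u A) / 2 else 0

/-- `u ∈ T_v` is single (with `√ε = 1/2304`). -/
def IsSingle (G : SimpleGraph V) (w : V → ℝ) (A : Finset V) (u v : V) : Prop :=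
  (1 - 1 / 2304 : ℝ) ≤ w u / w v ∧ w u / w v ≤ 1 + 1 / 2304 ∧
  wsum w (nbhd1 G u A) ≤ (1 + 1 / 2304) * w v

/-- `u ∈ T_v` is double (with `√ε = 1/2304`). -/
def IsDouble (G : SimpleGraph V) (w : V → ℝ) (A : Finset V) (u v : V) : Prop :=
  2 ≤ (nbhd1 G u A).card ∧
  ∃ v₂ ∈ (nbhd1 G u A).erase v, (∀ x ∈ (nbhd1 G u A).erase v, w x ≤ w v₂) ∧
    (1 - 1 / 2304 : ℝ) ≤ w u / w v ∧ w u / w v ≤ 1 + 1 / 2304 ∧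
    (1 - 1 / 2304 : ℝ) ≤ w v₂ / w v ∧ w v₂ / w v ≤ 1 ∧
    (2 - 1 / 2304) * w v ≤ wsum w (nbhd1 G u A) ∧ wsum w (nbhd1 G u A) < 2 * w u

/-- The contribution map. -/
def contr (G : SimpleGraph V) (w : V → ℝ) (A : Finset V) (u v : V) : ℝ :=
  if v ∈ nbhd1 G u A then max 0 (((w u) ^ 2 - wsq w ((nbhd1 G u A).erase v)) / w v) else 0

lemma wsq_nonneg (w : V → ℝ) (S : Finset V) : 0 ≤ wsq w S :=
  Finset.sum_nonneg fun i _ => sq_nonneg _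

lemma wsq_mono (w : V → ℝ) {S S' : Finset V} (h : S ⊆ S') : wsq w S ≤ wsq w S' :=
  Finset.sum_le_sum_of_subset_of_nonneg h fun i _ _ => sq_nonneg _

lemma wsq_insert_le (w : V → ℝ) (v : V) (S : Finset V) :
    wsq w (insert v S) ≤ w v ^ 2 + wsq w S := by
  by_cases hv : v ∈ S
  · rw [Finset.insert_eq_self.mpr hv]
    nlinarith [sq_nonneg (w v)]
  · rw [wsq, Finset.sum_insert hv]; rfl

lemma wsq_union_le (w : V → ℝ) (s t : Finset V) :
    wsq w (s ∪ t) ≤ wsq w s + wsq w t := by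
  have h := Finset.sum_union_inter (s₁ := s) (s₂ := t) (f := fun x => w x ^ 2)
  have h2 := wsq_nonneg w (s ∩ t)
  simp only [wsq] at *
  linarith

lemma wsq_biUnion_le (w : V → ℝ) (T : Finset V) (f : V → Finset V) :
    wsq w (T.biUnion f) ≤ ∑ u ∈ T, wsq w (f u) := by
  classical
  induction T using Finset.induction_on with
  | empty => simp [wsq]
  | @insert a s ha ih =>
    rw [Finset.biUnion_insert, Finset.sum_insert ha]
    calc wsq w (f a ∪ s.biUnion f) ≤ wsq w (f a) + wsq w (s.biUnion f) := wsq_union_le w _ _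
    _ ≤ wsq w (f a) + ∑ u ∈ s, wsq w (f u) := by linarith

theorem stmt10 [Fintype V] (G : SimpleGraph V) (d : ℕ) (hd : 3 ≤ d) (hG : ClawFree G d)
    (w : V → ℝ) (hw : ∀ v, 0 < w v) (Astar A : Finset V)
    (hAstarIndep : IsIndep G Astar)
    (hAstarMax : ∀ S : Finset V, IsIndep G S → wsum w S ≤ wsum w Astar)
    (hAIndep : IsIndep G A)
    (hNoImp : ∀ X : Finset V, ¬ LocalImprovement G d w A X) :
    ∀ v ∈ A, ∑ u ∈ Astar, contr G w A u v ≤ w v := by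
  intro v hv
  have hwv := hw v
  set num : V → ℝ := fun u => w u ^ 2 - wsq w ((nbhd1 G u A).erase v) with hnum
  set T : Finset V := Astar.filter (fun u => v ∈ nbhd1 G u A ∧ 0 < num u) with hTdef
  have hTsub : T ⊆ Astar := Finset.filter_subset _ _
  have hTmem : ∀ u ∈ T, v ∈ nbhd1 G u A ∧ 0 < num u := by
    intro u hu; exact (Finset.mem_filter.mp hu).2
  -- contr vanishes off T
  have hzero : ∀ u ∈ Astar, u ∉ T → contr G w A u v = 0 := by
    intro u hu hut
    unfold contr
    split_ifs with h
    · have hnp : ¬ 0 < num u := fun hpos => hut (Finset.mem_filter.mpr ⟨hu, h, hpos⟩)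
      have : num u / w v ≤ 0 :=
        div_nonpos_of_nonpos_of_nonneg (not_lt.mp hnp) hwv.le
      exact max_eq_left this
    · rfl
  have hsum : ∑ u ∈ T, contr G w A u v = ∑ u ∈ Astar, contr G w A u v :=
    Finset.sum_subset hTsub hzero
  have hcontrT : ∀ u ∈ T, contr G w A u v = num u / w v := by
    intro u hu
    obtain ⟨h1, h2⟩ := hTmem u hu
    unfold contr
    rw [if_pos h1]
    exact max_eq_right (div_pos h2 hwv).le
  -- T is independent
  have hTindep : IsIndep G T := fun a ha b hb hab => hAstarIndep a (hTsub ha) b (hTsub hb) hab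
  -- membership in nbhd1
  have hnbhd1 : ∀ u x : V, x ∈ nbhd1 G u A ↔ x ∈ A ∧ (x = u ∨ G.Adj u x) := by
    intro u x
    simp [nbhd1, nbhd, Finset.mem_filter]
  -- card bound
  have hcard : T.card ≤ (d - 1) ^ 2 + (d - 1) := by
    by_cases hvT : v ∈ T
    · have : T ⊆ {v} := by
        intro u hu
        rw [Finset.mem_singleton]
        by_contra hne
        have h1 := (hTmem u hu).1
        rw [hnbhd1] at h1
        have hadj : G.Adj u v := by
          rcases h1.2 with h | h
          · exact absurd h.symm hne
          · exact h
        exact hAstarIndep u (hTsub hu) v (hTsub hvT) hne hadj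
      calc T.card ≤ 1 := by simpa using Finset.card_le_card this
      _ ≤ (d - 1) ^ 2 + (d - 1) := by omega
    · have hadjall : ∀ x ∈ T, G.Adj v x := by
        intro x hx
        have h1 := (hTmem x hx).1
        rw [hnbhd1] at h1
        rcases h1.2 with h | h
        · exact absurd (h ▸ hx) hvT
        · exact h.symm
      calc T.card ≤ d - 1 := hG v T hadjall hTindep
      _ ≤ (d - 1) ^ 2 + (d - 1) := Nat.le_add_left _ _
  -- no improvement gives wsq T ≤ wsq (nbhd G T A)
  have hkey : wsq w T ≤ wsq w (nbhd G T A) := by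
    by_contra hlt
    exact hNoImp T ⟨hTindep, hcard, not_le.mp hlt⟩
  -- nbhd G T A is covered
  have hcover : nbhd G T A ⊆ insert v (T.biUnion fun u => (nbhd1 G u A).erase v) := by
    intro x hx
    rw [nbhd, Finset.mem_filter] at hx
    obtain ⟨hxA, hx2⟩ := hx
    by_cases hxv : x = v
    · exact hxv ▸ Finset.mem_insert_self _ _
    · refine Finset.mem_insert_of_mem (Finset.mem_biUnion.mpr ?_)
      rcases hx2 with hxT | ⟨u, huT, hadj⟩
      · exact ⟨x, hxT, Finset.mem_erase.mpr ⟨hxv, (hnbhd1 x x).mpr ⟨hxA, Or.inl rfl⟩⟩⟩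
      · exact ⟨u, huT, Finset.mem_erase.mpr ⟨hxv, (hnbhd1 u x).mpr ⟨hxA, Or.inr hadj⟩⟩⟩
  have hbound : wsq w (nbhd G T A) ≤ w v ^ 2 + ∑ u ∈ T, wsq w ((nbhd1 G u A).erase v) :=
    calc wsq w (nbhd G T A)
        ≤ wsq w (insert v (T.biUnion fun u => (nbhd1 G u A).erase v)) := wsq_mono w hcover
      _ ≤ w v ^ 2 + wsq w (T.biUnion fun u => (nbhd1 G u A).erase v) := wsq_insert_le w _ _
      _ ≤ w v ^ 2 + ∑ u ∈ T, wsq w ((nbhd1 G u A).erase v) := by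
          linarith [wsq_biUnion_le w T (fun u => (nbhd1 G u A).erase v)]
  have hnumsum : ∑ u ∈ T, num u ≤ w v ^ 2 := by
    have : ∑ u ∈ T, num u
        = wsq w T - ∑ u ∈ T, wsq w ((nbhd1 G u A).erase v) := by
      rw [wsq, ← Finset.sum_sub_distrib]
    linarith
  rw [← hsum, Finset.sum_congr rfl hcontrT, ← Finset.sum_div, div_le_iff₀ hwv]
  nlinarith [sq_nonneg (w v)]


end
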